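/- arXiv:1911.12030 — 5 statements merged into one kernel-verified Lean document; each statement's English description precedes it below -/
import Mathlib

section
/- Let p be a prime and R a commutative ring. For all a, b ∈ R, the coefficient of index 1 of the Witt vector (teichmuller a) + (teichmuller b) ∈ 𝕎 R equals −∑_{i=1}^{p−1} (C(p,i)/p) · a^i · b^{p−i}, where C(p,i)/p denotes the integer p.choose i divided by p (an exact division for 0 < i < p). Equivalently, ((teichmuller a) + (teichmuller b)).coeff 1 is the evaluation at (a,b) of the integer polynomial (X^p + Y^p − (X+Y)^p)/p. -/
open WittVector Finset

private lemma teich_aux (p : ℕ) [hp : Fact p.Prime] {A : Type*} [CommRing A]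
    (hinj : ∀ x y : A, (p : A) * x = (p : A) * y → x = y) (a b : A) :
    (WittVector.teichmuller p a + WittVector.teichmuller p b).coeff 1 =
      - ∑ i ∈ Finset.Ioo 0 p, ((p.choose i / p : ℕ) : A) * a ^ i * b ^ (p - i) := by
  set s := WittVector.teichmuller p a + WittVector.teichmuller p b with hs
  have hg : WittVector.ghostComponent 1 s = a ^ p + b ^ p := by
    rw [hs, map_add, WittVector.ghostComponent_teichmuller,
      WittVector.ghostComponent_teichmuller, pow_one]
  have hexp : WittVector.ghostComponent 1 s =
      s.coeff 0 ^ p + (p : A) * s.coeff 1 := by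
    rw [WittVector.ghostComponent_apply, aeval_wittPolynomial]
    simp [Finset.sum_range_succ]
  have h0 : s.coeff 0 = a + b := by
    rw [hs, WittVector.add_coeff_zero, WittVector.teichmuller_coeff_zero,
      WittVector.teichmuller_coeff_zero]
  apply hinj
  rw [hexp, h0] at hg
  have hp2 : 2 ≤ p := hp.out.two_le
  have hsplit : Finset.range (p + 1) = insert 0 (insert p (Finset.Ioo 0 p)) := by
    ext i; simp only [Finset.mem_range, Finset.mem_insert, Finset.mem_Ioo]; omega
  have hpow : (a + b) ^ p = a ^ p + b ^ p +
      ∑ i ∈ Finset.Ioo 0 p, (p.choose i : A) * a ^ i * b ^ (p - i) := by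
    rw [add_pow, hsplit, Finset.sum_insert (by simp; omega), Finset.sum_insert (by simp)]
    simp only [pow_zero, Nat.sub_zero, Nat.choose_zero_right, Nat.cast_one, one_mul, mul_one,
      Nat.sub_self, Nat.choose_self]
    rw [Finset.sum_congr rfl (fun i _ => by ring :
      ∀ i ∈ Finset.Ioo 0 p, a ^ i * b ^ (p - i) * (p.choose i : A)
        = (p.choose i : A) * a ^ i * b ^ (p - i))]
    ring
  have key : (p : A) * s.coeff 1 = a ^ p + b ^ p - (a + b) ^ p := by
    linear_combination hg
  rw [key, hpow]
  rw [mul_neg, Finset.mul_sum]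
  have : ∀ i ∈ Finset.Ioo 0 p,
      (p : A) * (((p.choose i / p : ℕ) : A) * a ^ i * b ^ (p - i)) =
      (p.choose i : A) * a ^ i * b ^ (p - i) := by
    intro i hi
    simp only [Finset.mem_Ioo] at hi
    have hd : p ∣ p.choose i := hp.out.dvd_choose_self (by omega) hi.2
    rw [← mul_assoc, ← mul_assoc, ← Nat.cast_mul, Nat.mul_div_cancel' hd]
  rw [Finset.sum_congr rfl this]
  ring

/-- For a prime `p` and a commutative ring `R`, the Witt coordinate of index `1` of
`teichmuller a + teichmuller b` equals `-∑_{i=1}^{p-1} (C(p,i)/p) a^i b^{p-i}`,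
the evaluation at `(a,b)` of the integer polynomial `(X^p + Y^p - (X+Y)^p)/p`. -/
theorem teichmuller_add_coeff_one (p : ℕ) [hp : Fact p.Prime]
    (R : Type*) [CommRing R] (a b : R) :
    (WittVector.teichmuller p a + WittVector.teichmuller p b).coeff 1 =
      - ∑ i ∈ Finset.Ioo 0 p, ((p.choose i / p : ℕ) : R) * a ^ i * b ^ (p - i) := by
  have hinj : ∀ x y : MvPolynomial (Fin 2) ℤ,
      (p : MvPolynomial (Fin 2) ℤ) * x = (p : MvPolynomial (Fin 2) ℤ) * y → x = y := by
    intro x y h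
    exact mul_left_cancel₀ (by exact_mod_cast hp.out.ne_zero) h
  have haux := teich_aux p hinj (MvPolynomial.X 0) (MvPolynomial.X 1)
  have h2 := congrArg ((MvPolynomial.aeval ![a, b]).toRingHom : MvPolynomial (Fin 2) ℤ →+* R) haux
  rw [← WittVector.map_coeff, map_add, WittVector.map_teichmuller,
    WittVector.map_teichmuller] at h2
  simpa using h2
end

section
/- Let p be a prime and k a finite field of characteristic p. There exist two-variable integer polynomials P₁, P₂ ∈ ℤ[x,y] such that for all a, b ∈ k, in the ring 𝕎 k of p-typical Witt vectors one has teichmuller(a) + teichmuller(b) ≡ teichmuller(a+b) + p · teichmuller(P₁(a,b)) + p² · teichmuller(P₂(a,b)) (mod p³ 𝕎 k), where P_i(a,b) ∈ k denotes the evaluation of P_i at (a,b) under the canonical map ℤ[x,y] → k[x,y]. -/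
open WittVector

variable (p : ℕ) [hp : Fact p.Prime]

-- auxiliary: V^[j] (F^[j] z) = z * p^j in char p
theorem aux_vf {R : Type*} [CommRing R] [CharP R p] (j : ℕ) (z : WittVector p R) :
    (verschiebung (p := p))^[j] ((WittVector.frobenius (p := p) (R := R))^[j] z) = z * (p : WittVector p R) ^ j := by
  induction j generalizing z with
  | zero => simp
  | succ j ih =>
    rw [Function.iterate_succ_apply (WittVector.frobenius), Function.iterate_succ_apply' (verschiebung),
      ih (WittVector.frobenius z)]
    have : WittVector.frobenius z * (p : WittVector p R) ^ j
        = WittVector.frobenius (z * (p : WittVector p R) ^ j) := by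
      rw [map_mul, map_pow, map_natCast]
    rw [this, verschiebung_frobenius, pow_succ, mul_assoc]

theorem coeff_zero_sub_teichmuller {R : Type*} [CommRing R] [Fact p.Prime]
    (x : WittVector p R) :
    (x - teichmuller p (x.coeff 0)).coeff 0 = 0 := by
  have : WittVector.constantCoeff (x - teichmuller p (x.coeff 0)) = 0 := by
    rw [map_sub]
    simp [WittVector.constantCoeff_apply, teichmuller_coeff_zero]
  simpa [WittVector.constantCoeff_apply] using this

/-- Let `p` be a prime and `k` a finite field of characteristic `p`. There exist
two-variable integer polynomials `P₁, P₂` such that for all `a b ∈ k`,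
`teichmuller a + teichmuller b ≡ teichmuller (a+b) + p • teichmuller (P₁(a,b))
 + p² • teichmuller (P₂(a,b))  (mod p³ 𝕎 k)`. -/
theorem teichmuller_add_mod_p_cubed (p : ℕ) [hp : Fact p.Prime]
    (k : Type*) [Field k] [Fintype k] [CharP k p] :
    ∃ P₁ P₂ : MvPolynomial (Fin 2) ℤ, ∀ a b : k,
      WittVector.teichmuller p a + WittVector.teichmuller p b -
        (WittVector.teichmuller p (a + b) +
          (p : WittVector p k) *
            WittVector.teichmuller p (MvPolynomial.aeval ![a, b] P₁) +
          (p : WittVector p k) ^ 2 *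
            WittVector.teichmuller p (MvPolynomial.aeval ![a, b] P₂))
        ∈ Ideal.span {((p : WittVector p k)) ^ 3} := by
  classical
  obtain ⟨n, -, hcard⟩ := FiniteField.card k p
  set A : (MvPolynomial (Fin 2) ℤ) := MvPolynomial.X 0 with hA
  set B : (MvPolynomial (Fin 2) ℤ) := MvPolynomial.X 1 with hB
  set u : WittVector p (MvPolynomial (Fin 2) ℤ) :=
    teichmuller p A + teichmuller p B - teichmuller p (A + B) with hu
  -- u has zero constant coefficient
  have hu0 : u.coeff 0 = 0 := by
    have : WittVector.constantCoeff u = 0 := by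
      rw [hu, map_sub, map_add]
      simp [WittVector.constantCoeff_apply, teichmuller_coeff_zero]
    simpa [WittVector.constantCoeff_apply] using this
  have hu1 : u = verschiebung (u.shift 1) := by
    have := WittVector.eq_iterate_verschiebung (x := u) (n := 1)
      (by intro i hi; interval_cases i; exact hu0)
    simpa using this
  set y₁ : WittVector p (MvPolynomial (Fin 2) ℤ) := u.shift 1 with hy₁
  set E₁ : (MvPolynomial (Fin 2) ℤ) := y₁.coeff 0 with hE₁
  set z₁ : WittVector p (MvPolynomial (Fin 2) ℤ) := y₁ - teichmuller p E₁ with hz₁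
  have hz₁0 : z₁.coeff 0 = 0 := coeff_zero_sub_teichmuller p y₁
  have hz₁1 : z₁ = verschiebung (z₁.shift 1) := by
    have := WittVector.eq_iterate_verschiebung (x := z₁) (n := 1)
      (by intro i hi; interval_cases i; exact hz₁0)
    simpa using this
  set y₂ : WittVector p (MvPolynomial (Fin 2) ℤ) := z₁.shift 1 with hy₂
  set E₂ : (MvPolynomial (Fin 2) ℤ) := y₂.coeff 0 with hE₂
  set z₂ : WittVector p (MvPolynomial (Fin 2) ℤ) := y₂ - teichmuller p E₂ with hz₂
  have hz₂0 : z₂.coeff 0 = 0 := coeff_zero_sub_teichmuller p y₂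
  have hz₂1 : z₂ = verschiebung (z₂.shift 1) := by
    have := WittVector.eq_iterate_verschiebung (x := z₂) (n := 1)
      (by intro i hi; interval_cases i; exact hz₂0)
    simpa using this
  set y₃ : WittVector p (MvPolynomial (Fin 2) ℤ) := z₂.shift 1 with hy₃
  set w : WittVector p (MvPolynomial (Fin 2) ℤ) :=
    u - verschiebung (teichmuller p E₁)
      - verschiebung (verschiebung (teichmuller p E₂)) with hw
  have hwV : w = verschiebung (verschiebung (verschiebung y₃)) := by
    rw [hw, hu1,
      ← AddMonoidHom.map_sub (verschiebung (p := p) (R := MvPolynomial (Fin 2) ℤ)) y₁ (teichmuller p E₁),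
      ← hz₁, hz₁1,
      ← AddMonoidHom.map_sub (verschiebung (p := p) (R := MvPolynomial (Fin 2) ℤ)) (verschiebung y₂)
        (verschiebung (teichmuller p E₂)),
      ← AddMonoidHom.map_sub (verschiebung (p := p) (R := MvPolynomial (Fin 2) ℤ)) y₂ (teichmuller p E₂),
      ← hz₂, hz₂1]
  -- the polynomials
  have hn1 : 1 ≤ (n : ℕ) := n.one_le
  refine ⟨E₁ ^ p ^ ((n : ℕ) - 1), E₂ ^ p ^ (2 * ((n : ℕ) - 1)), fun a b => ?_⟩
  set f : MvPolynomial (Fin 2) ℤ →+* k :=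
    (MvPolynomial.aeval ![a, b] : MvPolynomial (Fin 2) ℤ →ₐ[ℤ] k).toRingHom with hf
  have hfA : f A = a := by simp [hf, hA, MvPolynomial.aeval_X]
  have hfB : f B = b := by simp [hf, hB, MvPolynomial.aeval_X]
  set c₁ : k := MvPolynomial.aeval ![a, b] (E₁ ^ p ^ ((n : ℕ) - 1)) with hc₁
  set c₂ : k := MvPolynomial.aeval ![a, b] (E₂ ^ p ^ (2 * ((n : ℕ) - 1))) with hc₂
  have hc₁f : c₁ = f (E₁ ^ p ^ ((n : ℕ) - 1)) := hc₁
  have hc₂f : c₂ = f (E₂ ^ p ^ (2 * ((n : ℕ) - 1))) := hc₂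
  have hc₁p : c₁ ^ p = f E₁ := by
    rw [hc₁f, map_pow, ← pow_mul, ← pow_succ]
    have h1 : (n : ℕ) - 1 + 1 = (n : ℕ) := by omega
    rw [h1, ← hcard]
    exact FiniteField.pow_card _
  have hc₂p : c₂ ^ p ^ 2 = f E₂ := by
    rw [hc₂f, map_pow, ← pow_mul, ← pow_add]
    have h2 : 2 * ((n : ℕ) - 1) + 2 = (n : ℕ) * 2 := by omega
    rw [h2, pow_mul, ← hcard]
    exact FiniteField.pow_card_pow _ _
  -- p * teichmuller c = V (teichmuller (c^p)) in char p
  have pt : ∀ c : k, (p : WittVector p k) * teichmuller p c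
      = verschiebung (teichmuller p (c ^ p)) := by
    intro c
    rw [mul_comm, ← verschiebung_frobenius, frobenius_eq_map_frobenius,
      WittVector.map_teichmuller]
    rfl
  have hp1 : (p : WittVector p k) * teichmuller p c₁
      = verschiebung (teichmuller p (f E₁)) := by rw [pt, hc₁p]
  have hpV : ∀ x : WittVector p k, (p : WittVector p k) * verschiebung x
      = verschiebung ((p : WittVector p k) * x) := by
    intro x
    rw [← nsmul_eq_mul, ← nsmul_eq_mul, map_nsmul]
  have hp2 : (p : WittVector p k) ^ 2 * teichmuller p c₂
      = verschiebung (verschiebung (teichmuller p (f E₂))) := by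
    rw [pow_two, mul_assoc, pt, hpV, pt, ← pow_mul, ← pow_two, hc₂p]
  -- mapping the universal identity to k
  have hmap : WittVector.map f w
      = teichmuller p a + teichmuller p b
        - (teichmuller p (a + b)
          + (p : WittVector p k) * teichmuller p c₁
          + (p : WittVector p k) ^ 2 * teichmuller p c₂) := by
    rw [hp1, hp2, hw, hu, map_sub, map_sub, map_sub, map_add,
      WittVector.map_teichmuller, WittVector.map_teichmuller,
      WittVector.map_teichmuller, WittVector.map_verschiebung,
      WittVector.map_verschiebung, WittVector.map_verschiebung,
      WittVector.map_teichmuller, WittVector.map_teichmuller,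
      hfA, hfB, map_add, hfA, hfB]
    ring
  haveI : ExpChar k p := ExpChar.prime hp.out
  haveI : PerfectRing k p := PerfectRing.ofFiniteOfIsReduced p k
  obtain ⟨m, hm⟩ := ((WittVector.frobenius_bijective p k).surjective.iterate 3)
    (WittVector.map f y₃)
  have key : WittVector.map f w = m * (p : WittVector p k) ^ 3 := by
    rw [hwV, WittVector.map_verschiebung, WittVector.map_verschiebung,
      WittVector.map_verschiebung, ← hm]
    exact aux_vf p 3 m
  rw [Ideal.mem_span_singleton]
  exact ⟨m, by rw [← hmap, key, mul_comm]⟩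
end

section
/- Let p be a prime, f ≥ 1, and k a finite field with q = p^f elements. There exists a two-variable integer polynomial P₁ ∈ ℤ[x,y] whose degree in each of the two variables is at most p^{f−1}(p−1), such that for all a, b ∈ k, in the ring 𝕎 k of p-typical Witt vectors one has teichmuller(a) + teichmuller(b) ≡ teichmuller(a+b) + p · teichmuller(P₁(a,b)) (mod p² 𝕎 k), where P₁(a,b) ∈ k denotes the evaluation of P₁ at (a,b) under the canonical map ℤ[x,y] → k[x,y]. -/
/-!
Over `ℤ[X₀, X₁]` the Witt vector `τ X₀ + τ X₁ - τ (X₀ + X₁)` has zeroth coefficient `0`, so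
its first ghost component shows that its first coefficient `S` satisfies
`p • S = X₀ ^ p + X₁ ^ p - (X₀ + X₁) ^ p`; the binomial theorem then bounds the degree of `S`
in each variable by `p - 1`. Over a perfect ring of characteristic `p`, where
`(τ c * p).coeff 1 = c ^ p`, the difference `τ a + τ b - τ (a + b) - p τ c` has vanishing first
two coefficients as soon as `c ^ p = S(a, b)`, which puts it in `p² 𝕎 k`. In `𝔽_{p^f}` the
`p`-th root is `c = S(a, b) ^ p ^ (f - 1)`.
-/

open MvPolynomial Finset

namespace WittVector

variable (p : ℕ) [hp : Fact p.Prime]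

noncomputable def teichmullerAddCarry : MvPolynomial (Fin 2) ℤ :=
  (teichmuller p (X 0) + teichmuller p (X 1) - teichmuller p (X 0 + X 1) :
    WittVector p (MvPolynomial (Fin 2) ℤ)).coeff 1

theorem ghostComponent_one {R : Type*} [CommRing R] (x : WittVector p R) :
    ghostComponent 1 x = x.coeff 0 ^ p + p * x.coeff 1 := by
  simp [ghostComponent_apply, add_comm]

theorem coeff_zero_teichmuller_add_sub {R : Type*} [CommRing R] (a b : R) :
    (teichmuller p a + teichmuller p b - teichmuller p (a + b)).coeff 0 = 0 := by
  rw [← constantCoeff_apply, map_sub, map_add]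
  simp only [constantCoeff_apply, teichmuller_coeff_zero, sub_self]

theorem coeff_one_teichmuller_add_sub {R : Type*} [CommRing R] (a b : R) :
    (teichmuller p a + teichmuller p b - teichmuller p (a + b)).coeff 1 =
      aeval ![a, b] (teichmullerAddCarry p) := by
  let φ : MvPolynomial (Fin 2) ℤ →+* R :=
    (aeval ![a, b] : MvPolynomial (Fin 2) ℤ →ₐ[ℤ] R)
  have hmap : map φ (teichmuller p (X 0) + teichmuller p (X 1) - teichmuller p (X 0 + X 1)) =
      teichmuller p a + teichmuller p b - teichmuller p (a + b) := by
    simp [map_teichmuller, φ]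
  rw [← hmap, map_coeff]
  rfl

theorem natCast_mul_teichmullerAddCarry :
    (p : MvPolynomial (Fin 2) ℤ) * teichmullerAddCarry p =
      X 0 ^ p + X 1 ^ p - (X 0 + X 1) ^ p := by
  have hghost := ghostComponent_one p
    (teichmuller p (X 0 : MvPolynomial (Fin 2) ℤ) + teichmuller p (X 1) -
      teichmuller p (X 0 + X 1))
  simp only [map_sub, map_add, ghostComponent_teichmuller, pow_one,
    coeff_zero_teichmuller_add_sub, zero_pow hp.out.ne_zero, zero_add] at hghost
  rw [teichmullerAddCarry, hghost]

theorem teichmullerAddCarry_eq :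
    teichmullerAddCarry p =
      -∑ k ∈ Ioo 0 p,
        X 0 ^ k * X 1 ^ (p - k) * ((p.choose k / p : ℕ) : MvPolynomial (Fin 2) ℤ) := by
  refine mul_left_cancel₀ (Nat.cast_ne_zero.mpr hp.out.ne_zero) ?_
  rw [natCast_mul_teichmullerAddCarry, add_pow_prime_eq' hp.out, mul_neg]
  ring

theorem degreeOf_teichmullerAddCarry_le (j : Fin 2) :
    degreeOf j (teichmullerAddCarry p) ≤ p - 1 := by
  rw [teichmullerAddCarry_eq, degreeOf_neg]
  refine (degreeOf_sum_le _ _ _).trans (Finset.sup_le fun k hk => ?_)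
  obtain ⟨hk0, hkp⟩ := mem_Ioo.mp hk
  rw [← map_natCast C]
  refine (degreeOf_mul_C_le _ _ _).trans ((degreeOf_mul_le _ _ _).trans ?_)
  refine (add_le_add (degreeOf_pow_le _ _ _) (degreeOf_pow_le _ _ _)).trans ?_
  fin_cases j <;> simp [degreeOf_X] <;> omega

theorem teichmuller_add_sub_mem_span_p_sq {R : Type*} [CommRing R] [CharP R p] [PerfectRing R p]
    (a b c : R) (hc : c ^ p = aeval ![a, b] (teichmullerAddCarry p)) :
    teichmuller p a + teichmuller p b -
        (teichmuller p (a + b) + (p : WittVector p R) * teichmuller p c) ∈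
      Ideal.span {(p : WittVector p R) ^ 2} := by
  have hsplit : teichmuller p a + teichmuller p b - (teichmuller p (a + b) + p * teichmuller p c)
      = (teichmuller p a + teichmuller p b - teichmuller p (a + b)) - teichmuller p c * p := by
    ring
  rw [hsplit, mem_span_p_pow_iff_le_coeff_eq_zero, ← le_coeff_eq_iff_le_sub_coeff_eq_zero]
  intro i hi
  interval_cases i
  · rw [coeff_zero_teichmuller_add_sub, mul_charP_coeff_zero]
  · rw [coeff_one_teichmuller_add_sub, mul_charP_coeff_succ, teichmuller_coeff_zero, hc]

end WittVector

/-- Let `p` be a prime, `f ≥ 1`, and `k` a finite field with `q = p^f` elements. There is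
a two-variable integer polynomial `P₁` of degree at most `p^{f-1}(p-1)` in each variable
such that for all `a b ∈ k`,
`teichmuller a + teichmuller b ≡ teichmuller (a+b) + p • teichmuller (P₁(a,b)) (mod p² 𝕎 k)`. -/
theorem teichmuller_add_mod_p_squared (p f : ℕ) [hp : Fact p.Prime] (hf : 1 ≤ f)
    (k : Type*) [Field k] [Fintype k] (hcard : Fintype.card k = p ^ f) :
    ∃ P₁ : MvPolynomial (Fin 2) ℤ,
      MvPolynomial.degreeOf 0 P₁ ≤ p ^ (f - 1) * (p - 1) ∧
      MvPolynomial.degreeOf 1 P₁ ≤ p ^ (f - 1) * (p - 1) ∧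
      ∀ a b : k,
        WittVector.teichmuller p a + WittVector.teichmuller p b -
          (WittVector.teichmuller p (a + b) +
            (p : WittVector p k) *
              WittVector.teichmuller p (MvPolynomial.aeval ![a, b] P₁))
          ∈ Ideal.span {((p : WittVector p k)) ^ 2} := by
  have : CharP k p := charP_of_card_eq_prime_pow hcard
  have hdeg (j : Fin 2) :
      degreeOf j (WittVector.teichmullerAddCarry p ^ p ^ (f - 1)) ≤ p ^ (f - 1) * (p - 1) :=
    (degreeOf_pow_le _ _ _).trans
      (Nat.mul_le_mul_left _ (WittVector.degreeOf_teichmullerAddCarry_le p j))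
  refine ⟨_, hdeg 0, hdeg 1, fun a b => WittVector.teichmuller_add_sub_mem_span_p_sq p a b _ ?_⟩
  rw [map_pow, ← pow_mul, ← pow_succ, Nat.sub_add_cancel hf, ← hcard, FiniteField.pow_card]
end

section
/- Let p be a prime, q = p^f, 𝔽_q a finite field with q elements, K a field, and ι : 𝔽_q →+* K a ring homomorphism. Fix r : Fin f → ℕ with 0 ≤ r_j ≤ p−1 for all j. Consider the polynomial ring K[x_0,…,x_{f−1},y_0,…,y_{f−1}] and let V be the K-linear span of the monomials ∏_{j=0}^{f−1} x_j^{r_j−i_j} y_j^{i_j} over all i : Fin f → ℕ with 0 ≤ i_j ≤ r_j for all j. For b ∈ 𝔽_q, let u_b be the K-algebra endomorphism of the polynomial ring determined by x_j ↦ x_j and y_j ↦ ι(b)^{p^j} · x_j + y_j for all j. Then for P ∈ V one has u_b(P) = P for all b ∈ 𝔽_q if and only if P is a K-scalar multiple of ∏_{j=0}^{f−1} x_j^{r_j}. In particular, the space of such invariant elements of V is one-dimensional over K. -/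
open MvPolynomial

/-!
Substituting `x_j = 1, y_j = T^{p^j}` sends the monomial with exponents `i⃗` to `T^{∑ i_j p^j}`.
Since `i_j ≤ r_j < p`, these exponents are distinct (base-`p` digits) and below `q`, so the
substitution is injective on `V` and lands in polynomials of degree `< q`. Evaluating its result
at `T = ι b` is the same as applying `u_b` and then setting `x = 1, y = 0`; for an invariant `P`
the resulting polynomial therefore takes the single value `P(1, 0)` at the `q` points `ι(𝔽_q)`,
so it is constant, and injectivity gives `P = P(1, 0) • x^{r⃗}`.
-/

namespace SymPolynomialModel

variable {σ K : Type*} [Field K]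

variable (K) in
noncomputable def symMonomial [Fintype σ] (r i : σ → ℕ) : MvPolynomial (σ ⊕ σ) K :=
  ∏ j, X (Sum.inl j) ^ (r j - i j) * X (Sum.inr j) ^ i j

variable (K) in
noncomputable def symSpan [Fintype σ] (r : σ → ℕ) : Submodule K (MvPolynomial (σ ⊕ σ) K) :=
  Submodule.span K (symMonomial K r '' Set.Iic r)

noncomputable def unipotentSubst (t : σ → K) :
    MvPolynomial (σ ⊕ σ) K →ₐ[K] MvPolynomial (σ ⊕ σ) K :=
  aeval (Sum.elim (fun j => X (Sum.inl j)) fun j => C (t j) * X (Sum.inl j) + X (Sum.inr j))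

noncomputable def weightSubst (w : σ → ℕ) : MvPolynomial (σ ⊕ σ) K →ₐ[K] Polynomial K :=
  aeval (Sum.elim 1 fun j => Polynomial.X ^ w j)

variable (w : σ → ℕ)

theorem eval_weightSubst (a : K) (P : MvPolynomial (σ ⊕ σ) K) :
    (weightSubst w P).eval a = aeval (Sum.elim 1 0) (unipotentSubst (fun j => a ^ w j) P) := by
  rw [← Polynomial.coe_aeval_eq_eval, ← AlgHom.comp_apply, ← AlgHom.comp_apply]
  congr 1
  ext (j | j) <;> simp [weightSubst, unipotentSubst]

variable [Fintype σ] (r : σ → ℕ)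

theorem weightSubst_symMonomial (i : σ → ℕ) :
    weightSubst w (symMonomial K r i) = Polynomial.X ^ ∑ j, i j * w j := by
  simp [weightSubst, symMonomial, ← pow_mul, mul_comm, Finset.prod_pow_eq_pow_sum]

theorem weightSubst_mem_degreeLT {n : ℕ} (h : ∀ i ≤ r, ∑ j, i j * w j < n)
    {P : MvPolynomial (σ ⊕ σ) K} (hP : P ∈ symSpan K r) :
    weightSubst w P ∈ Polynomial.degreeLT K n := by
  refine (Submodule.span_le (p := (Polynomial.degreeLT K n).comap (weightSubst w).toLinearMap)).2
    ?_ hP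
  rintro _ ⟨i, hi, rfl⟩
  change weightSubst w (symMonomial K r i) ∈ Polynomial.degreeLT K n
  rw [weightSubst_symMonomial, Polynomial.mem_degreeLT, Polynomial.degree_X_pow]
  exact_mod_cast h i hi

theorem injOn_weightSubst (h : Set.InjOn (fun i => ∑ j, i j * w j) (Set.Iic r)) :
    Set.InjOn (weightSubst w)
      (symSpan K r : Set (MvPolynomial (σ ⊕ σ) K)) := by
  have hli : LinearIndependent K fun i : Set.Iic r =>
      (weightSubst w).toLinearMap (symMonomial K r i) := by
    simpa [weightSubst_symMonomial, Polynomial.X_pow_eq_monomial, Function.comp_def] using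
      (Polynomial.basisMonomials K).linearIndependent.comp _ h.injective
  rw [symSpan, Set.image_eq_range]
  exact LinearMap.injOn_of_disjoint_ker le_rfl (Submodule.range_ker_disjoint hli)

end SymPolynomialModel

theorem Nat.sum_mul_pow_lt_pow {p f : ℕ} {i : Fin f → ℕ} (hi : ∀ j, i j < p) :
    ∑ j, i j * p ^ (j : ℕ) < p ^ f :=
  (finFunctionFinEquiv fun j => (⟨i j, hi j⟩ : Fin p)).isLt

theorem Nat.injOn_sum_mul_pow (p f : ℕ) :
    Set.InjOn (fun i : Fin f → ℕ => ∑ j, i j * p ^ (j : ℕ)) {i | ∀ j, i j < p} := by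
  intro i hi i' hi' h
  have hdigits : (fun j => (⟨i j, hi j⟩ : Fin p)) = fun j => ⟨i' j, hi' j⟩ :=
    finFunctionFinEquiv.injective (Fin.ext h)
  funext j
  exact congrArg Fin.val (congrFun hdigits j)

open SymPolynomialModel in
/-- The space of `U`-invariants in the polynomial model of `Sym^{r⃗}` is the line spanned
by `x^{r⃗} = ∏_j x_j^{r_j}`: a polynomial `P` in the span `V` of the monomials
`∏_j x_j^{r_j - i_j} y_j^{i_j}` (for `0 ≤ i⃗ ≤ r⃗`) is fixed by every substitution
`x_j ↦ x_j, y_j ↦ ι(b)^{p^j} x_j + y_j` (`b ∈ 𝔽_q`) if and only if it is a scalar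
multiple of `∏_j x_j^{r_j}`. -/
theorem invariants_eq_span_xr (p f : ℕ) (hp : p.Prime)
    (Fq : Type*) [Field Fq] [Fintype Fq] (hcard : Fintype.card Fq = p ^ f)
    (K : Type*) [Field K] (ι : Fq →+* K)
    (r : Fin f → ℕ) (hr : ∀ j, r j ≤ p - 1)
    (P : MvPolynomial (Fin f ⊕ Fin f) K)
    (hP : P ∈ Submodule.span K
      {Q : MvPolynomial (Fin f ⊕ Fin f) K | ∃ i : Fin f → ℕ, (∀ j, i j ≤ r j) ∧
        Q = ∏ j, X (Sum.inl j) ^ (r j - i j) * X (Sum.inr j) ^ (i j)}) :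
    (∀ b : Fq,
        aeval (R := K) (Sum.elim
          (fun j => (X (Sum.inl j) : MvPolynomial (Fin f ⊕ Fin f) K))
          (fun j : Fin f => C (ι b ^ p ^ (j : ℕ)) * X (Sum.inl j) + X (Sum.inr j))) P = P)
      ↔ ∃ c : K, P = c • ∏ j, (X (Sum.inl j) : MvPolynomial (Fin f ⊕ Fin f) K) ^ r j := by
  have hPV : P ∈ symSpan K r := by
    rw [symSpan]
    convert hP using 2
    ext Q
    simp [symMonomial, eq_comm, Pi.le_def]
  have hxr : ∏ j, (X (Sum.inl j) : MvPolynomial (Fin f ⊕ Fin f) K) ^ r j = symMonomial K r 0 := by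
    simp [symMonomial]
  have hdigits : Set.Iic r ⊆ {i | ∀ j, i j < p} := fun i hi j =>
    (hi j).trans_lt (Nat.lt_of_le_sub_one hp.pos (hr j))
  constructor
  · intro hinv
    set w : Fin f → ℕ := fun j => p ^ (j : ℕ)
    set c := aeval (Sum.elim (1 : Fin f → K) 0) P
    have hdeg : (weightSubst w P).degree < (Finset.univ : Finset Fq).card := by
      rw [Finset.card_univ, hcard, ← Polynomial.mem_degreeLT]
      exact weightSubst_mem_degreeLT w r
        (fun i hi => Nat.sum_mul_pow_lt_pow (hdigits hi)) hPV
    have hconst : weightSubst w P = Polynomial.C c :=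
      Polynomial.eq_of_degrees_lt_of_eval_index_eq _ ι.injective.injOn hdeg
        ((Polynomial.degree_C_le).trans_lt (by simpa using Fintype.card_pos))
        (fun b _ => by rw [eval_weightSubst, Polynomial.eval_C]; exact congrArg _ (hinv b))
    refine ⟨c, injOn_weightSubst w r ((Nat.injOn_sum_mul_pow p f).mono hdigits) hPV
      ((symSpan K r).smul_mem c (Submodule.subset_span ⟨0, by simp, hxr.symm⟩)) ?_⟩
    rw [hconst, hxr, map_smul, weightSubst_symMonomial]
    simp [Polynomial.smul_eq_C_mul]
  · rintro ⟨c, rfl⟩ b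
    simp
end

section
/- Let p be a prime, f ≥ 2, q = p^f, 𝔽_q a finite field with q elements, K a field, and ι : 𝔽_q →+* K a ring homomorphism. Fix r : Fin f → ℕ with 0 ≤ r_j ≤ p−1 for all j, and fix an index j₀ with r_{j₀} ≤ p−2. Then the function 𝔽_q → K given by λ ↦ ι(λ)^{p^{j₀}(r_{j₀}+1)} does NOT lie in the K-linear span of the functions λ ↦ ι(λ)^{∑_{j=0}^{f−1} p^j i_j} taken over all i : Fin f → ℕ with 0 ≤ i_j ≤ r_j for all j. Equivalently, for any choice of scalars u_{i⃗} ∈ K (0 ≤ i⃗ ≤ r⃗) there exists λ ∈ 𝔽_q with ι(λ)^{p^{j₀}(r_{j₀}+1)} ≠ ∑_{0 ≤ i⃗ ≤ r⃗} u_{i⃗} · ι(λ)^{∑_j p^j i_j}. -/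
/-!
The exponent `e = p ^ j₀ * (r j₀ + 1)` and the exponents `∑ j, p ^ j * i j` are base-`p`
numbers below `q`, and they differ in the digit of index `j₀` (`r j₀ + 1` versus
`i j₀ ≤ r j₀`). So if `ι λ ^ e = ∑ u i * ι λ ^ (∑ j, p ^ j * i j)` held for every `λ`, the
polynomials `X ^ e` and `∑ C (u i) * X ^ (∑ j, p ^ j * i j)`, both of degree `< q`, would
agree at the `q` distinct points `ι λ`, hence be equal, which their coefficients of `X ^ e`
forbid.
-/

open Finset Polynomial

theorem Fin.sum_pow_mul_eq_add_mul_sum (b : ℕ) {n : ℕ} (a : Fin (n + 1) → ℕ) :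
    ∑ j : Fin (n + 1), b ^ (j : ℕ) * a j = a 0 + b * ∑ j : Fin n, b ^ (j : ℕ) * a j.succ := by
  simp only [Fin.sum_univ_succ, Fin.val_zero, pow_zero, one_mul, Fin.val_succ, pow_succ, mul_sum]
  ring_nf

theorem Nat.sum_pow_mul_lt_pow {b : ℕ} : ∀ {n : ℕ} {a : Fin n → ℕ}, (∀ j, a j < b) →
    ∑ j : Fin n, b ^ (j : ℕ) * a j < b ^ n
  | 0, _, _ => by simp
  | n + 1, a, ha => by
    have ih : ∑ j : Fin n, b ^ (j : ℕ) * a j.succ + 1 ≤ b ^ n :=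
      sum_pow_mul_lt_pow fun j => ha j.succ
    rw [Fin.sum_pow_mul_eq_add_mul_sum, pow_succ']
    nlinarith [ha 0]

theorem Nat.sum_pow_mul_div_pow_mod {b : ℕ} : ∀ {n : ℕ} {a : Fin n → ℕ}, (∀ j, a j < b) →
    ∀ k : Fin n, (∑ j : Fin n, b ^ (j : ℕ) * a j) / b ^ (k : ℕ) % b = a k
  | n + 1, a, ha, k => by
    have hb : 0 < b := (Nat.zero_le _).trans_lt (ha 0)
    rw [Fin.sum_pow_mul_eq_add_mul_sum]
    cases k using Fin.cases with
    | zero => simp [Nat.add_mul_mod_self_left, Nat.mod_eq_of_lt (ha 0)]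
    | succ k =>
      rw [Fin.val_succ, pow_succ', ← Nat.div_div_eq_div_mul, Nat.add_mul_div_left _ _ hb,
        Nat.div_eq_of_lt (ha 0), zero_add]
      exact sum_pow_mul_div_pow_mod (fun j => ha j.succ) k

theorem exists_pow_ne_sum_mul_pow {R α ι : Type*} [CommRing R] [IsDomain R] [Fintype α]
    [Fintype ι] {g : α → R} (hg : Function.Injective g) {e : ℕ} (he : e < Fintype.card α)
    {E : ι → ℕ} (hE : ∀ i, E i < Fintype.card α) (hne : ∀ i, E i ≠ e) (u : ι → R) :
    ∃ a, g a ^ e ≠ ∑ i, u i * g a ^ E i := by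
  by_contra! h
  have hdeg : (∑ i, C (u i) * X ^ E i).natDegree < Fintype.card α := by
    obtain ⟨n, hn, hlt⟩ : ∃ n, (∀ i, E i ≤ n) ∧ n < Fintype.card α :=
      ⟨Fintype.card α - 1, fun i => by have := hE i; omega, by omega⟩
    refine (natDegree_sum_le_of_forall_le _ _ fun i _ => ?_).trans_lt hlt
    exact (natDegree_C_mul_X_pow_le _ _).trans (hn i)
  have hpoly : (X ^ e : R[X]) = ∑ i, C (u i) * X ^ E i :=
    eq_of_natDegree_lt_card_of_eval_eq _ _ hg (fun a => by simp [h a, eval_finsetSum])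
      (max_lt (by rwa [natDegree_X_pow]) hdeg)
  have hcoeff := congrArg (coeff · e) hpoly
  simp [coeff_C_mul, coeff_X_pow, fun i => (hne i).symm] at hcoeff

theorem pow_not_in_span_general (p f : ℕ) (hp : p.Prime)
    (Fq : Type*) [Field Fq] [Fintype Fq] (hcard : Fintype.card Fq = p ^ f)
    (K : Type*) [Field K] (ι : Fq →+* K)
    (r : Fin f → ℕ) (hr : ∀ j, r j ≤ p - 1)
    (j₀ : Fin f) (hj₀ : r j₀ ≤ p - 2)
    (u : (∀ j : Fin f, Fin (r j + 1)) → K) :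
    ∃ lam : Fq, ι lam ^ (p ^ (j₀ : ℕ) * (r j₀ + 1)) ≠
      ∑ i : (∀ j : Fin f, Fin (r j + 1)),
        u i * ι lam ^ (∑ j : Fin f, p ^ (j : ℕ) * (i j : ℕ)) := by
  set d : Fin f → ℕ := Pi.single j₀ (r j₀ + 1)
  have hd : ∀ j, d j < p := fun j => by
    have := hp.two_le
    rcases eq_or_ne j j₀ with rfl | _ <;> simp [d, *] <;> omega
  have he : p ^ (j₀ : ℕ) * (r j₀ + 1) = ∑ j : Fin f, p ^ (j : ℕ) * d j := by
    simp [d, Pi.single_apply]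
  have hi : ∀ (i : ∀ j : Fin f, Fin (r j + 1)) j, (i j : ℕ) < p := fun i j => by
    have := (i j).isLt
    have := hr j
    have := hp.two_le
    omega
  refine exists_pow_ne_sum_mul_pow ι.injective ?_ (fun i => ?_) (fun i hEq => ?_) u
  · rw [hcard, he]
    exact Nat.sum_pow_mul_lt_pow hd
  · rw [hcard]
    exact Nat.sum_pow_mul_lt_pow (hi i)
  · have hdigit := congrArg (· / p ^ (j₀ : ℕ) % p) (hEq.trans he)
    simp only [Nat.sum_pow_mul_div_pow_mod (hi i), Nat.sum_pow_mul_div_pow_mod hd] at hdigit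
    have := (i j₀).isLt
    simp [d] at hdigit
    omega

/-- Let `p` be a prime, `f ≥ 2`, `𝔽_q` a finite field with `q = p^f` elements, `K` a field
and `ι : 𝔽_q →+* K` a ring homomorphism. Fix `r : Fin f → ℕ` with `r j ≤ p - 1` and an
index `j₀` with `r j₀ ≤ p - 2`. Then for any scalars `u i⃗ ∈ K` (indexed by the tuples
`0 ≤ i⃗ ≤ r⃗`) there is `λ ∈ 𝔽_q` with
`ι(λ)^{p^{j₀}(r_{j₀}+1)} ≠ ∑_{i⃗} u_{i⃗} ι(λ)^{∑_j p^j i_j}`;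
i.e. `λ ↦ ι(λ)^{p^{j₀}(r_{j₀}+1)}` is not in the span of the `λ ↦ ι(λ)^{∑_j p^j i_j}`. -/
theorem pow_not_in_span (p f : ℕ) (hp : p.Prime) (hf : 2 ≤ f)
    (Fq : Type*) [Field Fq] [Fintype Fq] (hcard : Fintype.card Fq = p ^ f)
    (K : Type*) [Field K] (ι : Fq →+* K)
    (r : Fin f → ℕ) (hr : ∀ j, r j ≤ p - 1)
    (j₀ : Fin f) (hj₀ : r j₀ ≤ p - 2)
    (u : (∀ j : Fin f, Fin (r j + 1)) → K) :
    ∃ lam : Fq, ι lam ^ (p ^ (j₀ : ℕ) * (r j₀ + 1)) ≠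
      ∑ i : (∀ j : Fin f, Fin (r j + 1)),
        u i * ι lam ^ (∑ j : Fin f, p ^ (j : ℕ) * (i j : ℕ)) :=
  pow_not_in_span_general p f hp Fq hcard K ι r hr j₀ hj₀ u
end
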